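/- arXiv:1912.01497 — 2 statements merged into one kernel-verified Lean document; each statement's English description precedes it below -/
import Mathlib

section
/- Let Q be a Hermitian positive definite n×n matrix, x ∈ ℂ^n, and τ ≥ 0. Then log₂ det(I_n + Q^{-1} x x^H) ≤ τ if and only if (2^τ − 1) Q − x x^H is positive semidefinite. -/
/-!
By the matrix determinant lemma, `det (1 + Q⁻¹ x xᴴ) = 1 + xᴴ Q⁻¹ x`, so the left-hand side says
`xᴴ Q⁻¹ x ≤ 2 ^ τ - 1`. For `a > 0` the block matrix `[[a Q, x], [xᴴ, 1]]` has the two Schur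
complements `a Q - x xᴴ` and `1 - xᴴ (a Q)⁻¹ x`, each positive semidefinite exactly when the block
matrix is; hence `a Q - x xᴴ` is positive semidefinite iff `xᴴ Q⁻¹ x ≤ a`. For `a = 0` both
conditions say `x = 0`.
-/

open Matrix ComplexOrder

namespace Matrix

theorem det_one_add_mul_vecMulVec {R : Type*} [CommRing R] {n : Type*} [Fintype n]
    [DecidableEq n] (A : Matrix n n R) (x y : n → R) :
    det (1 + A * vecMulVec x y) = 1 + y ⬝ᵥ A *ᵥ x := by
  rw [vecMulVec_eq Unit, ← Matrix.mul_assoc, ← replicateCol_mulVec,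
    det_one_add_replicateCol_mul_replicateRow]

variable {𝕜 : Type*} [RCLike 𝕜]

theorem posSemidef_unit_iff {M : Matrix Unit Unit 𝕜} : M.PosSemidef ↔ 0 ≤ M () () := by
  have hM : M = diagonal fun _ => M () () := by ext ⟨⟩ ⟨⟩; rfl
  rw [hM, posSemidef_diagonal_iff]
  exact ⟨fun h => h (), fun h _ => h⟩

variable {n : Type*}

theorem posSemidef_neg_vecMulVec_iff {x : n → 𝕜} :
    (-vecMulVec x (star x)).PosSemidef ↔ x = 0 := by
  refine ⟨fun h => funext fun i => ?_, by rintro rfl; simpa using PosSemidef.zero⟩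
  have h_nonpos : x i * star (x i) ≤ 0 := by
    simpa [vecMulVec_apply] using h.diag_nonneg (i := i)
  simpa using le_antisymm h_nonpos (mul_star_self_nonneg (x i))

variable [Fintype n]

theorem PosDef.re_dotProduct_mulVec_nonpos_iff {M : Matrix n n 𝕜} (hM : M.PosDef)
    {x : n → 𝕜} : RCLike.re (star x ⬝ᵥ M *ᵥ x) ≤ 0 ↔ x = 0 := by
  refine ⟨fun h => ?_, by rintro rfl; simp⟩
  by_contra hx
  exact h.not_gt (RCLike.pos_iff.mp (hM.dotProduct_mulVec_pos hx)).1

variable [DecidableEq n]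

theorem PosDef.posSemidef_smul_sub_vecMulVec_iff_of_pos {Q : Matrix n n 𝕜} (hQ : Q.PosDef)
    (x : n → 𝕜) {a : ℝ} (ha : 0 < a) :
    ((a : 𝕜) • Q - vecMulVec x (star x)).PosSemidef ↔ RCLike.re (star x ⬝ᵥ Q⁻¹ *ᵥ x) ≤ a := by
  have haQ : ((a : 𝕜) • Q).PosDef := hQ.smul (by simpa using ha)
  have := haQ.isUnit.invertible
  have : Invertible (1 : Matrix Unit Unit 𝕜) := invertibleOne
  have haQ_inv : ((a : 𝕜) • Q)⁻¹ = (a : 𝕜)⁻¹ • Q⁻¹ := by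
    have : Invertible (a : 𝕜) := invertibleOfNonzero (by simpa using ha.ne')
    rw [Matrix.inv_smul _ _ ((isUnit_iff_isUnit_det Q).mp hQ.isUnit), invOf_eq_inv]
  have h_schur₂₂ : replicateCol Unit x * (1 : Matrix Unit Unit 𝕜)⁻¹ * (replicateCol Unit x)ᴴ =
      vecMulVec x (star x) := by
    rw [inv_one, Matrix.mul_one, conjTranspose_replicateCol, vecMulVec_eq Unit]
  have h_schur₁₁ : ((1 : Matrix Unit Unit 𝕜) -
      (replicateCol Unit x)ᴴ * ((a : 𝕜) • Q)⁻¹ * replicateCol Unit x) () () =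
        1 - (a : 𝕜)⁻¹ * star x ⬝ᵥ Q⁻¹ *ᵥ x := by
    rw [conjTranspose_replicateCol, haQ_inv, Matrix.mul_smul, Matrix.smul_mul, Matrix.mul_assoc,
      ← replicateCol_mulVec, replicateRow_mul_replicateCol]
    simp
  rw [← h_schur₂₂, ← PosDef.fromBlocks₂₂ _ _ PosDef.one, PosDef.fromBlocks₁₁ _ _ haQ,
    posSemidef_unit_iff, h_schur₁₁]
  obtain ⟨c, -, hc⟩ :=
    RCLike.nonneg_iff_exists_ofReal.mp (hQ.inv.posSemidef.dotProduct_mulVec_nonneg x)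
  rw [← hc, RCLike.ofReal_re]
  norm_cast
  rw [sub_nonneg, inv_mul_le_one₀ ha]

theorem PosDef.posSemidef_smul_sub_vecMulVec_iff {Q : Matrix n n 𝕜} (hQ : Q.PosDef)
    (x : n → 𝕜) {a : ℝ} (ha : 0 ≤ a) :
    ((a : 𝕜) • Q - vecMulVec x (star x)).PosSemidef ↔ RCLike.re (star x ⬝ᵥ Q⁻¹ *ᵥ x) ≤ a := by
  rcases ha.eq_or_lt with rfl | ha
  · simpa [hQ.inv.re_dotProduct_mulVec_nonpos_iff] using posSemidef_neg_vecMulVec_iff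
  · exact hQ.posSemidef_smul_sub_vecMulVec_iff_of_pos x ha

end Matrix

/-- For Hermitian positive definite `Q`, a vector `x` and `τ ≥ 0`:
`log₂ det (I + Q⁻¹ x xᴴ) ≤ τ` iff `(2^τ - 1) • Q - x xᴴ` is positive semidefinite. -/
theorem log_det_leakage_iff_psd {n : ℕ} (Q : Matrix (Fin n) (Fin n) ℂ) (hQ : Q.PosDef)
    (x : Fin n → ℂ) (τ : ℝ) (hτ : 0 ≤ τ) :
    Real.logb 2 ((Matrix.det (1 + Q⁻¹ * Matrix.vecMulVec x (star x))).re) ≤ τ ↔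
      ((((2 : ℝ) ^ τ - 1 : ℝ) : ℂ) • Q - Matrix.vecMulVec x (star x)).PosSemidef := by
  have hc : 0 ≤ (star x ⬝ᵥ Q⁻¹ *ᵥ x).re :=
    (RCLike.nonneg_iff.mp (hQ.inv.posSemidef.dotProduct_mulVec_nonneg x)).1
  have h_two_rpow : 1 ≤ (2 : ℝ) ^ τ := Real.one_le_rpow one_le_two hτ
  refine Iff.trans ?_ (hQ.posSemidef_smul_sub_vecMulVec_iff x (sub_nonneg.mpr h_two_rpow)).symm
  rw [det_one_add_mul_vecMulVec, Complex.add_re, Complex.one_re,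
    Real.logb_le_iff_le_rpow one_lt_two (by linarith), le_sub_iff_add_le']
  rfl
end

section
/- Penalty exactness for rank-constrained problems: Let f be continuous on a compact feasible set F of Hermitian matrices, and define g(V; ρ) = f(V) + (1/(2ρ))(‖V‖_* − ‖V‖₂). Let V* minimize f over {V ∈ F : ‖V‖_* − ‖V‖₂ = 0}, and let V_s minimize g(·; ρ_s) over F with ρ_s → 0. Then every limit point V̄ of {V_s} satisfies ‖V̄‖_* − ‖V̄‖₂ = 0 and f(V̄) ≤ f(V*), hence V̄ is optimal for the rank-constrained problem. -/
/-!
The penalty `p V = ‖V‖_* - ‖V‖₂` is nonnegative, and comparing `V_s` with the feasible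
`V*` gives `f (V_s) + p (V_s) / (2 ρ_s) ≤ f V*`. Since `f` is bounded below on the compact
set `F`, this forces `p (V_s) = O(ρ_s) → 0` and `f (V_s) ≤ f V*`, and both facts pass to a
cluster point because `p` is continuous and `f` is continuous on the closed set `F`. The
penalty is continuous because `‖V‖_* = Re tr |V|` and `‖V‖₂` is the operator norm, where
`|V| = (Vᴴ V)^{1/2}` is continuous in the C⋆-algebra of matrices.
-/

open Matrix ComplexOrder

/-- The nuclear norm of a complex matrix: the sum of its singular values. -/
noncomputable def nuclearNorm {n : ℕ} (X : Matrix (Fin n) (Fin n) ℂ) : ℝ :=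
  ∑ i, Real.sqrt ((Matrix.posSemidef_conjTranspose_mul_self X).1.eigenvalues i)

/-- The spectral norm of a complex matrix: its largest singular value. -/
noncomputable def spectralNorm2 {n : ℕ} (X : Matrix (Fin n) (Fin n) ℂ) : ℝ :=
  ⨆ i, Real.sqrt ((Matrix.posSemidef_conjTranspose_mul_self X).1.eigenvalues i)

open Filter Topology

namespace Matrix

variable {n 𝕜 : Type*} [Fintype n] [DecidableEq n] [RCLike 𝕜]

lemma IsHermitian.trace_cfc {A : Matrix n n 𝕜} (hA : A.IsHermitian) (f : ℝ → ℝ) :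
    (hA.cfc f).trace = ∑ i, (f (hA.eigenvalues i) : 𝕜) := by
  rw [IsHermitian.cfc, Unitary.conjStarAlgAut_apply, trace_mul_cycle,
    Unitary.coe_star_mul_self, one_mul, trace_diagonal]
  rfl

open scoped Matrix.Norms.L2Operator in
lemma IsHermitian.l2_opNorm_cfc {A : Matrix n n 𝕜} (hA : A.IsHermitian) (f : ℝ → ℝ) :
    ‖hA.cfc f‖ = ‖f ∘ hA.eigenvalues‖ := by
  rw [IsHermitian.cfc, Unitary.conjStarAlgAut_apply, ← Unitary.coe_star,
    CStarRing.norm_mul_coe_unitary, CStarRing.norm_coe_unitary_mul, l2_opNorm_diagonal,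
    Pi.norm_def, Pi.norm_def]
  simp

open scoped MatrixOrder in
lemma cfcAbs_eq_cfc_sqrt (X : Matrix n n 𝕜) :
    CFC.abs X = (posSemidef_conjTranspose_mul_self X).1.cfc Real.sqrt := by
  rw [CFC.abs, CFC.sqrt_eq_cfc, cfc_nnreal_eq_real _ _ (star_mul_self_nonneg X),
    star_eq_conjTranspose, (posSemidef_conjTranspose_mul_self X).1.cfc_eq]
  congr 1
  funext x
  rw [Real.sqrt.eq_def]

end Matrix

section SingularValueNorms

variable {n : ℕ}

open scoped MatrixOrder in
lemma nuclearNorm_eq_re_trace_cfcAbs (X : Matrix (Fin n) (Fin n) ℂ) :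
    nuclearNorm X = (CFC.abs X).trace.re := by
  rw [cfcAbs_eq_cfc_sqrt, IsHermitian.trace_cfc, Complex.re_sum]
  rfl

open scoped Matrix.Norms.L2Operator MatrixOrder in
lemma spectralNorm2_eq_l2_opNorm (X : Matrix (Fin n) (Fin n) ℂ) : spectralNorm2 X = ‖X‖ := by
  rw [← CFC.norm_abs, cfcAbs_eq_cfc_sqrt, IsHermitian.l2_opNorm_cfc]
  have hsup_nonneg : 0 ≤ spectralNorm2 X := Real.iSup_nonneg fun i => Real.sqrt_nonneg _
  refine le_antisymm ?_ ((pi_norm_le_iff_of_nonneg hsup_nonneg).2 fun i => ?_)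
  · exact Real.iSup_le
      (fun i => (Real.le_norm_self _).trans (norm_le_pi_norm (Real.sqrt ∘ _) i)) (norm_nonneg _)
  · rw [Function.comp_apply, Real.norm_of_nonneg (Real.sqrt_nonneg _)]
    exact le_ciSup (f := fun i => Real.sqrt _) (Set.finite_range _).bddAbove i

-- The L2 operator norm is set up to induce the entrywise topology on matrices.
open scoped Matrix.Norms.L2Operator MatrixOrder in
theorem continuous_nuclearNorm : Continuous (nuclearNorm : Matrix (Fin n) (Fin n) ℂ → ℝ) := by
  simp_rw [funext nuclearNorm_eq_re_trace_cfcAbs]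
  exact Complex.continuous_re.comp (continuous_id.matrix_trace.comp CFC.continuous_abs)

open scoped Matrix.Norms.L2Operator in
theorem continuous_spectralNorm2 :
    Continuous (spectralNorm2 : Matrix (Fin n) (Fin n) ℂ → ℝ) := by
  simp_rw [funext spectralNorm2_eq_l2_opNorm]
  exact continuous_norm

lemma spectralNorm2_le_nuclearNorm (X : Matrix (Fin n) (Fin n) ℂ) :
    spectralNorm2 X ≤ nuclearNorm X :=
  Real.iSup_le (fun i => Finset.single_le_sum (fun _ _ => Real.sqrt_nonneg _) (Finset.mem_univ i))
    (Finset.sum_nonneg fun _ _ => Real.sqrt_nonneg _)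

end SingularValueNorms

section PenaltyMethod

variable {X : Type*} [TopologicalSpace X] {F : Set X} {f p : X → ℝ} {μ : ℕ → ℝ}
  {x : ℕ → X} {y : X}

theorem tendsto_penalty_zero_of_penalized_le (hF : IsCompact F) (hf : ContinuousOn f F)
    (hp : ∀ z ∈ F, 0 ≤ p z) (hμ : Tendsto μ atTop atTop) (hxF : ∀ s, x s ∈ F)
    (hx : ∀ s, f (x s) + μ s * p (x s) ≤ f y) :
    Tendsto (fun s => p (x s)) atTop (𝓝 0) := by
  obtain ⟨m, hm⟩ := hF.bddBelow_image hf
  have hbound : ∀ s, 0 < μ s → p (x s) ≤ (f y - m) / μ s := fun s hμs => by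
    rw [le_div_iff₀' hμs]
    linarith [hx s, hm ⟨x s, hxF s, rfl⟩]
  refine tendsto_of_tendsto_of_tendsto_of_le_of_le' tendsto_const_nhds
    ((tendsto_const_nhds (x := f y - m)).div_atTop hμ)
    (Eventually.of_forall fun s => hp _ (hxF s)) ?_
  filter_upwards [hμ.eventually_gt_atTop 0] with s hμs using hbound s hμs

theorem penalty_eq_zero_and_le_of_mapClusterPt [T2Space X] (hF : IsCompact F)
    (hf : ContinuousOn f F) (hpc : Continuous p) (hp : ∀ z ∈ F, 0 ≤ p z)
    (hμ : Tendsto μ atTop atTop) (hxF : ∀ s, x s ∈ F)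
    (hx : ∀ s, f (x s) + μ s * p (x s) ≤ f y) {v : X} (hv : MapClusterPt v atTop x) :
    p v = 0 ∧ f v ≤ f y := by
  constructor
  · have hpv : MapClusterPt (p v) atTop (fun s => p (x s)) :=
      hv.continuousAt_comp hpc.continuousAt
    exact eq_of_nhds_neBot <| hpv.neBot.mono <| inf_le_inf_left _
      (tendsto_penalty_zero_of_penalized_le hF hf hp hμ hxF hx)
  · have hsub : IsClosed (F ∩ f ⁻¹' Set.Iic (f y)) :=
      hf.preimage_isClosed_of_isClosed hF.isClosed isClosed_Iic
    refine (hsub.mem_of_mapClusterPt hv ?_).2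
    filter_upwards [hμ.eventually_ge_atTop 0] with s hμs
    exact ⟨hxF s, show f (x s) ≤ f y by linarith [hx s, mul_nonneg hμs (hp _ (hxF s))]⟩

end PenaltyMethod

theorem penalty_exactness_general {n : ℕ} (F : Set (Matrix (Fin n) (Fin n) ℂ)) (hF : IsCompact F)
    (f : Matrix (Fin n) (Fin n) ℂ → ℝ) (hf : ContinuousOn f F)
    (Vstar : Matrix (Fin n) (Fin n) ℂ) (hVstarF : Vstar ∈ F)
    (hVstarFeas : nuclearNorm Vstar - spectralNorm2 Vstar = 0)
    (ρ : ℕ → ℝ) (hρpos : ∀ s, 0 < ρ s) (hρ : Filter.Tendsto ρ Filter.atTop (nhds 0))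
    (Vs : ℕ → Matrix (Fin n) (Fin n) ℂ) (hVsF : ∀ s, Vs s ∈ F)
    (hVsOpt : ∀ s, ∀ V ∈ F,
      f (Vs s) + (1 / (2 * ρ s)) * (nuclearNorm (Vs s) - spectralNorm2 (Vs s)) ≤
        f V + (1 / (2 * ρ s)) * (nuclearNorm V - spectralNorm2 V))
    (Vbar : Matrix (Fin n) (Fin n) ℂ) (hVbar : MapClusterPt Vbar Filter.atTop Vs) :
    nuclearNorm Vbar - spectralNorm2 Vbar = 0 ∧ f Vbar ≤ f Vstar := by
  have hweight : Tendsto (fun s => 1 / (2 * ρ s)) atTop atTop := by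
    have h2ρ : Tendsto (fun s => 2 * ρ s) atTop (𝓝[>] 0) :=
      tendsto_nhdsWithin_iff.2 ⟨by simpa using hρ.const_mul 2,
        Eventually.of_forall fun s => mul_pos two_pos (hρpos s)⟩
    simpa only [one_div, Pi.inv_def] using h2ρ.inv_tendsto_nhdsGT_zero
  refine penalty_eq_zero_and_le_of_mapClusterPt hF hf
    (continuous_nuclearNorm.sub continuous_spectralNorm2)
    (fun V _ => sub_nonneg.2 (spectralNorm2_le_nuclearNorm V)) hweight hVsF (fun s => ?_) hVbar
  simpa [hVstarFeas] using hVsOpt s Vstar hVstarF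

/-- Penalty exactness: if `V_s` minimizes `f(V) + (1/(2ρ_s))(‖V‖_* - ‖V‖₂)` over a
compact feasible set `F` with penalty parameters `ρ_s → 0`, and `V*` is optimal for the
rank-constrained problem, then every limit point `V̄` of `(V_s)` satisfies
`‖V̄‖_* - ‖V̄‖₂ = 0` and `f V̄ ≤ f V*`. -/
theorem penalty_exactness {n : ℕ} (F : Set (Matrix (Fin n) (Fin n) ℂ)) (hF : IsCompact F)
    (f : Matrix (Fin n) (Fin n) ℂ → ℝ) (hf : ContinuousOn f F)
    (Vstar : Matrix (Fin n) (Fin n) ℂ) (hVstarF : Vstar ∈ F)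
    (hVstarFeas : nuclearNorm Vstar - spectralNorm2 Vstar = 0)
    (hVstarOpt : ∀ V ∈ F, nuclearNorm V - spectralNorm2 V = 0 → f Vstar ≤ f V)
    (ρ : ℕ → ℝ) (hρpos : ∀ s, 0 < ρ s) (hρ : Filter.Tendsto ρ Filter.atTop (nhds 0))
    (Vs : ℕ → Matrix (Fin n) (Fin n) ℂ) (hVsF : ∀ s, Vs s ∈ F)
    (hVsOpt : ∀ s, ∀ V ∈ F,
      f (Vs s) + (1 / (2 * ρ s)) * (nuclearNorm (Vs s) - spectralNorm2 (Vs s)) ≤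
        f V + (1 / (2 * ρ s)) * (nuclearNorm V - spectralNorm2 V))
    (Vbar : Matrix (Fin n) (Fin n) ℂ) (hVbar : MapClusterPt Vbar Filter.atTop Vs) :
    nuclearNorm Vbar - spectralNorm2 Vbar = 0 ∧ f Vbar ≤ f Vstar :=
  penalty_exactness_general F hF f hf Vstar hVstarF hVstarFeas ρ hρpos hρ Vs hVsF hVsOpt Vbar hVbar
end
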